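/- Let X be a fine δ-hyperbolic graph, a, b, c vertices, and let ã (resp. c̃) be the farthest point from a (resp. c) among vertices lying on every geodesic from a to b and from a to c (resp. from c to a and c to b) and making angles > 50δ toward the two other points, with ã = a if no such point exists. Then d(a, ã) ≤ d(a, c̃); i.e., along any geodesic from a to c one passes through a, ã, c̃, c in this order. -/

import Mathlib

def SimpleGraph.avoid {V : Type*} (G : SimpleGraph V) (v : V) : SimpleGraph V where
  Adj a b := G.Adj a b ∧ a ≠ v ∧ b ≠ v
  symm := ⟨fun a b h => ⟨h.1.symm, h.2.2, h.2.1⟩⟩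
  loopless := ⟨fun a h => G.irrefl h.1⟩

noncomputable def SimpleGraph.angle {V : Type*} (G : SimpleGraph V) (v w w' : V) : ℕ∞ :=
  (G.avoid v).edist w w'

/-- The angle at `v` between `x` and `y` is greater than `θ`: there are edges at
`v` on geodesics from `v` towards `x` and `y` making an angle `> θ`. -/
def SimpleGraph.AngleGT {V : Type*} (G : SimpleGraph V) (v x y : V) (θ : ℕ) : Prop :=
  ∃ w w', G.Adj v w ∧ G.Adj v w' ∧
    G.dist v x = G.dist w x + 1 ∧ G.dist v y = G.dist w' y + 1 ∧
    (θ : ℕ∞) < G.angle v w w'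

/-- `G` is fine: for every edge and every `L`, there are only finitely many
simple simplicial loops of length at most `L` through that edge. -/
def SimpleGraph.Fine {V : Type*} (G : SimpleGraph V) : Prop :=
  ∀ (L : ℕ) (e : Sym2 V), e ∈ G.edgeSet →
    {c : (v : V) × G.Walk v v | c.2.IsCycle ∧ c.2.length ≤ L ∧ e ∈ c.2.edges}.Finite

def SimpleGraph.SlimTriangles {V : Type*} (G : SimpleGraph V) (δ : ℕ) : Prop :=
  ∀ (a b c : V) (p : G.Walk a b) (q : G.Walk b c) (r : G.Walk a c),
    p.length = G.dist a b → q.length = G.dist b c → r.length = G.dist a c →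
    ∀ x ∈ r.support, ∃ y, (y ∈ p.support ∨ y ∈ q.support) ∧ G.dist x y ≤ δ

/-- `v` lies on every geodesic between `a` and `b`, on every geodesic between
`a` and `c`, and makes angles `> 50δ` at `v` between `a, b` and between `a, c`. -/
def SimpleGraph.BigAnglePt {V : Type*} (G : SimpleGraph V) (δ : ℕ) (a b c v : V) : Prop :=
  (∀ p : G.Walk a b, p.length = G.dist a b → v ∈ p.support) ∧
  (∀ p : G.Walk a c, p.length = G.dist a c → v ∈ p.support) ∧
  G.AngleGT v a b (50 * δ) ∧ G.AngleGT v a c (50 * δ)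

/-- `t` is the point `ã` associated to the triple `(a,b,c)`: the farthest point
from `a` among the vertices lying on every geodesic `[a,b]` and `[a,c]` with
both angles `> 50δ`, or `a` itself if no such vertex exists. -/
def SimpleGraph.IsTildePt {V : Type*} (G : SimpleGraph V) (δ : ℕ) (a b c t : V) : Prop :=
  ((¬ ∃ v, G.BigAnglePt δ a b c v) ∧ t = a) ∨
  (G.BigAnglePt δ a b c t ∧ ∀ u, G.BigAnglePt δ a b c u → G.dist a u ≤ G.dist a t)

lemma geodesic_mid {V : Type*} {G : SimpleGraph V} (hc : G.Connected) {a b v : V}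
    (h : ∀ p : G.Walk a b, p.length = G.dist a b → v ∈ p.support) :
    G.dist a v + G.dist v b = G.dist a b := by
  classical
  obtain ⟨p, hp⟩ := hc.exists_walk_length_eq_dist a b
  have hv := h p hp
  have h1 : G.dist a v ≤ (p.takeUntil v hv).length := SimpleGraph.dist_le _
  have h2 : G.dist v b ≤ (p.dropUntil v hv).length := SimpleGraph.dist_le _
  have h3 : (p.takeUntil v hv).length + (p.dropUntil v hv).length = p.length := by
    rw [← SimpleGraph.Walk.length_append, SimpleGraph.Walk.take_spec]
  have h4 := hc.dist_triangle (u := a) (v := v) (w := b)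
  omega

/-- In a fine `δ`-hyperbolic graph, for vertices `a, b, c` with associated points
`ã` and `c̃`, one has `d(a,ã) ≤ d(a,c̃)`: travelling along a geodesic from `a`
to `c` one meets `a`, `ã`, `c̃`, `c` in this order. -/
theorem tilde_order {V : Type*} (G : SimpleGraph V) (hc : G.Connected)
    (hf : G.Fine) (δ : ℕ) (hδ : G.SlimTriangles δ) (a b c ta tc : V)
    (hta : G.IsTildePt δ a b c ta) (htc : G.IsTildePt δ c a b tc) :
    G.dist a ta ≤ G.dist a tc := by
  rcases hta with ⟨_, rfl⟩ | ⟨⟨htab, htac, _⟩, _⟩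
  · simp [SimpleGraph.dist_self]
  rcases htc with ⟨_, rfl⟩ | ⟨⟨htca, htcb, _⟩, _⟩
  · have h1 := geodesic_mid hc htac
    omega
  · have h1 := geodesic_mid hc htab
    have h2 := geodesic_mid hc htac
    have h3 := geodesic_mid hc htca
    have h4 := geodesic_mid hc htcb
    have t1 := hc.dist_triangle (u := b) (v := ta) (w := c)
    have t2 := hc.dist_triangle (u := a) (v := tc) (w := b)
    have e1 : G.dist ta b = G.dist b ta := SimpleGraph.dist_comm
    have e2 : G.dist tc a = G.dist a tc := SimpleGraph.dist_comm
    have e3 : G.dist a c = G.dist c a := SimpleGraph.dist_comm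
    have e4 : G.dist b c = G.dist c b := SimpleGraph.dist_comm
    have e5 : G.dist ta c = G.dist c ta := SimpleGraph.dist_comm
    have e6 : G.dist tc b = G.dist b tc := SimpleGraph.dist_comm
    omega
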